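/- arXiv:2211.13563 — 7 statements merged into one kernel-verified Lean document; each statement's English description precedes it below -/
import Mathlib

section
/- If f is holomorphic and locally univalent on the unit disk with f(0)=0, f'(0)=1, and Re(1 + z f''(z)/f'(z)) > α for all z in the unit disk (i.e., f is convex of order α, 0 ≤ α < 1), then for all z in the unit disk, Re(1 + z f''(z)/f'(z)) ≥ α + (1/(4(1-α)))·(1-|z|²)·|f''(z)/f'(z)|². -/
/-!
Normalise `p = (1 + z f''/f' - α) / (1 - α)`, so that `Re p > 0` and `p = 1 + z G` with `G`
holomorphic. The Cayley transform `(p - 1) / (p + 1) = z G / (p + 1)` maps the disk into itself,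
so the Schwarz lemma, applied to the difference quotient at `0` (which also covers `z = 0`),
gives `|G| ≤ |p + 1|`. Then `4 Re p = |p + 1|² - |p - 1|² ≥ (1 - |z|²) |G|²`.
-/

open Metric Set

theorem Complex.norm_le_div_of_mapsTo_ball_sub_smul {E : Type*} [NormedAddCommGroup E]
    [NormedSpace ℂ E] {q : ℂ → E} {c z : ℂ} {R₁ R₂ : ℝ} (hq : DifferentiableOn ℂ q (ball c R₁))
    (h_maps : MapsTo (fun w => (w - c) • q w) (ball c R₁) (closedBall 0 R₂))
    (hz : z ∈ ball c R₁) :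
    ‖q z‖ ≤ R₂ / R₁ := by
  have hdslope : dslope (fun w => (w - c) • q w) c z = q z := by
    rcases eq_or_ne z c with rfl | hne
    · rw [dslope_same, deriv_fun_smul (differentiableAt_fun_id.sub_const z)
        (hq.differentiableAt (isOpen_ball.mem_nhds hz))]
      simp
    · exact dslope_sub_smul_of_ne q hne
  rw [← hdslope]
  exact Complex.norm_dslope_le_div_of_mapsTo_ball ((differentiableOn_id.sub_const c).smul hq)
    (by simpa using h_maps) hz

theorem Complex.norm_add_one_sq_sub_norm_sub_one_sq (p : ℂ) :
    ‖p + 1‖ ^ 2 - ‖p - 1‖ ^ 2 = 4 * p.re := by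
  simp only [Complex.sq_norm, Complex.normSq_apply, Complex.add_re, Complex.add_im,
    Complex.sub_re, Complex.sub_im, Complex.one_re, Complex.one_im]
  ring

theorem Complex.norm_sub_one_lt_norm_add_one {p : ℂ} (hp : 0 < p.re) : ‖p - 1‖ < ‖p + 1‖ := by
  have := p.norm_add_one_sq_sub_norm_sub_one_sq
  exact lt_of_pow_lt_pow_left₀ 2 (norm_nonneg _) (by linarith)

theorem one_sub_norm_sq_mul_norm_sq_le_four_mul_re_of_re_pos {G : ℂ → ℂ}
    (hG : DifferentiableOn ℂ G (ball 0 1)) (hre : ∀ z ∈ ball (0 : ℂ) 1, 0 < (1 + z * G z).re)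
    {z : ℂ} (hz : z ∈ ball 0 1) :
    (1 - ‖z‖ ^ 2) * ‖G z‖ ^ 2 ≤ 4 * (1 + z * G z).re := by
  have hne : ∀ w ∈ ball (0 : ℂ) 1, 2 + w * G w ≠ 0 := by
    intro w hw h
    have := hre w hw
    rw [show 1 + w * G w = -1 by linear_combination h] at this
    norm_num at this
  set q : ℂ → ℂ := fun w => G w / (2 + w * G w)
  have hq : DifferentiableOn ℂ q (ball 0 1) :=
    hG.div ((differentiableOn_const 2).add (differentiableOn_id.mul hG)) hne
  have h_maps : MapsTo (fun w => (w - 0) • q w) (ball 0 1) (closedBall 0 1) := by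
    intro w hw
    have hp := Complex.norm_sub_one_lt_norm_add_one (hre w hw)
    rw [add_sub_cancel_left, show 1 + w * G w + 1 = 2 + w * G w by ring] at hp
    simp only [mem_closedBall_zero_iff, sub_zero, smul_eq_mul]
    rw [← mul_div_assoc, norm_div, div_le_one (norm_pos_iff.2 (hne w hw))]
    exact hp.le
  have hqz : ‖G z‖ ≤ ‖2 + z * G z‖ := by
    have := Complex.norm_le_div_of_mapsTo_ball_sub_smul hq h_maps hz
    rwa [div_one, norm_div, div_le_one (norm_pos_iff.2 (hne z hz))] at this
  have hid := (1 + z * G z).norm_add_one_sq_sub_norm_sub_one_sq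
  rw [show 1 + z * G z + 1 = 2 + z * G z by ring, add_sub_cancel_left, norm_mul] at hid
  nlinarith [pow_le_pow_left₀ (norm_nonneg _) hqz 2]

theorem convex_order_alpha_lower_bound_re_general
    (f : ℂ → ℂ) (α : ℝ) (hα1 : α < 1)
    (hf : DifferentiableOn ℂ f (Metric.ball 0 1))
    (hf' : ∀ z ∈ Metric.ball (0:ℂ) 1, deriv f z ≠ 0)
    (hconv : ∀ z ∈ Metric.ball (0:ℂ) 1,
      α < (1 + z * (deriv (deriv f) z / deriv f z)).re) :
    ∀ z ∈ Metric.ball (0:ℂ) 1,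
      α + (1 / (4 * (1 - α))) * (1 - ‖z‖ ^ 2) *
          ‖deriv (deriv f) z / deriv f z‖ ^ 2
        ≤ (1 + z * (deriv (deriv f) z / deriv f z)).re := by
  intro z hz
  set g : ℂ → ℂ := fun w => deriv (deriv f) w / deriv f w
  have hfa := hf.analyticOnNhd isOpen_ball
  have hg : DifferentiableOn ℂ g (ball 0 1) :=
    hfa.deriv.deriv.differentiableOn.div hfa.deriv.differentiableOn hf'
  have hα : 0 < 1 - α := sub_pos.2 hα1
  have hre : ∀ w : ℂ, (1 + w * (g w / (1 - α : ℝ))).re = 1 + (w * g w).re / (1 - α) := by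
    intro w
    rw [← mul_div_assoc, Complex.add_re, Complex.one_re, Complex.div_ofReal_re]
  have hpos : ∀ w ∈ ball (0 : ℂ) 1, 0 < (1 + w * (g w / (1 - α : ℝ))).re := by
    intro w hw
    have := hconv w hw
    rw [Complex.add_re, Complex.one_re] at this
    rw [hre]
    field_simp
    linarith
  have key := one_sub_norm_sq_mul_norm_sq_le_four_mul_re_of_re_pos
    (hg.div_const ((1 - α : ℝ) : ℂ)) hpos hz
  rw [hre, norm_div, Complex.norm_real, Real.norm_of_nonneg hα.le] at key
  field_simp at key
  rw [Complex.add_re, Complex.one_re, mul_assoc, one_div_mul_eq_div, ← le_sub_iff_add_le',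
    div_le_iff₀ (by positivity)]
  linarith

theorem convex_order_alpha_lower_bound_re
    (f : ℂ → ℂ) (α : ℝ) (hα0 : 0 ≤ α) (hα1 : α < 1)
    (hf : DifferentiableOn ℂ f (Metric.ball 0 1))
    (hf' : ∀ z ∈ Metric.ball (0:ℂ) 1, deriv f z ≠ 0)
    (hf0 : f 0 = 0) (hf1 : deriv f 0 = 1)
    (hconv : ∀ z ∈ Metric.ball (0:ℂ) 1,
      α < (1 + z * (deriv (deriv f) z / deriv f z)).re) :
    ∀ z ∈ Metric.ball (0:ℂ) 1,
      α + (1 / (4 * (1 - α))) * (1 - ‖z‖ ^ 2) *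
          ‖deriv (deriv f) z / deriv f z‖ ^ 2
        ≤ (1 + z * (deriv (deriv f) z / deriv f z)).re :=
  convex_order_alpha_lower_bound_re_general f α hα1 hf hf' hconv
end

section
/- If f is holomorphic and locally univalent on the unit disk and convex of order α (0 ≤ α < 1), then for all z in the unit disk, |(1-|z|²)·f''(z)/f'(z) - 2(1-α)·conj(z)| ≤ 2(1-α). -/
/-! With `c = 1 - α` and `Q = f''/f'`, the function `p = 1 + zQ/c` has positive real part and
`p 0 = 1`, so its Cayley transform `zQ/(zQ + 2c)` maps the disk into itself and fixes `0`.
By the Schwarz lemma it equals `z ω(z)` with `‖ω‖ ≤ 1`, i.e. `Q = 2cω/(1 - zω)`, and then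
`(1 - ‖z‖²) Q - 2c z̄ = 2c (ω - z̄)/(1 - zω)`. Its norm is at most `2c` because
`‖1 - zω‖² - ‖ω - z̄‖² = (1 - ‖z‖²)(1 - ‖ω‖²) ≥ 0`. -/

open Complex ComplexConjugate Metric Set

lemma Complex.norm_lt_norm_add_two_mul_of_neg_lt_re {u : ℂ} {c : ℝ} (hc : 0 < c)
    (h : -c < u.re) : ‖u‖ < ‖u + 2 * c‖ := by
  rw [← sq_lt_sq₀ (norm_nonneg _) (norm_nonneg _), Complex.sq_norm, Complex.sq_norm, normSq_apply,
    normSq_apply]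
  simp only [add_re, add_im, mul_re, mul_im, ofReal_re, ofReal_im, re_ofNat, im_ofNat]
  nlinarith

lemma Complex.norm_sub_conj_le_norm_one_sub_mul {z ω : ℂ} (hz : ‖z‖ ≤ 1) (hω : ‖ω‖ ≤ 1) :
    ‖ω - conj z‖ ≤ ‖1 - z * ω‖ := by
  have key : ‖1 - z * ω‖ ^ 2 - ‖ω - conj z‖ ^ 2 = (1 - ‖z‖ ^ 2) * (1 - ‖ω‖ ^ 2) := by
    simp only [Complex.sq_norm, normSq_apply, sub_re, sub_im, mul_re, mul_im, conj_re, conj_im,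
      one_re, one_im]
    ring
  have : 0 ≤ (1 - ‖z‖ ^ 2) * (1 - ‖ω‖ ^ 2) :=
    mul_nonneg (by nlinarith [norm_nonneg z]) (by nlinarith [norm_nonneg ω])
  exact (sq_le_sq₀ (norm_nonneg _) (norm_nonneg _)).1 (by linarith)

lemma Complex.norm_le_one_of_mapsTo_ball_mul {ω : ℂ → ℂ}
    (hd : DifferentiableOn ℂ ω (ball 0 1))
    (h_maps : MapsTo (fun z => z * ω z) (ball 0 1) (ball 0 1)) {z : ℂ} (hz : z ∈ ball 0 1) :
    ‖ω z‖ ≤ 1 := by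
  have hdslope : dslope (fun z => z * ω z) 0 z = ω z := by
    rcases eq_or_ne z 0 with rfl | hne
    · have hω := (hd 0 hz).differentiableAt (isOpen_ball.mem_nhds hz)
      have : HasDerivAt (fun z => z * ω z) (1 * ω 0 + 0 * deriv ω 0) 0 :=
        (hasDerivAt_id' 0).mul hω.hasDerivAt
      simpa using this.deriv
    · simpa using dslope_sub_smul_of_ne ω hne
  have hφd : DifferentiableOn ℂ (fun z => z * ω z) (ball 0 1) :=
    differentiableOn_id.mul hd
  simpa [hdslope] using norm_dslope_le_div_of_mapsTo_ball hφd
    (by simpa using h_maps.mono_right ball_subset_closedBall) hz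

lemma Complex.norm_one_sub_sq_mul_sub_conj_le {z ω Q : ℂ} {c : ℝ} (hc : 0 ≤ c) (hz : ‖z‖ < 1)
    (hω : ‖ω‖ ≤ 1) (hQ : Q * (1 - z * ω) = 2 * c * ω) :
    ‖((1 - ‖z‖ ^ 2 : ℝ) : ℂ) * Q - 2 * c * conj z‖ ≤ 2 * c := by
  have hzω : ‖z * ω‖ < 1 := by
    rw [norm_mul]; nlinarith [norm_nonneg z, norm_nonneg ω]
  have hD : 0 < ‖1 - z * ω‖ := by
    rw [norm_pos_iff, sub_ne_zero]
    rintro h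
    simp [← h] at hzω
  have hfactor : (((1 - ‖z‖ ^ 2 : ℝ) : ℂ) * Q - 2 * c * conj z) * (1 - z * ω)
      = 2 * c * (ω - conj z) := by
    have hzz : z * conj z = ((‖z‖ ^ 2 : ℝ) : ℂ) := by
      rw [mul_conj, Complex.sq_norm]
    push_cast at hzz ⊢
    linear_combination (1 - (‖z‖ : ℂ) ^ 2) * hQ + 2 * c * ω * hzz
  refine le_of_mul_le_mul_right ?_ hD
  calc ‖((1 - ‖z‖ ^ 2 : ℝ) : ℂ) * Q - 2 * c * conj z‖ * ‖1 - z * ω‖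
      = 2 * c * ‖ω - conj z‖ := by
        rw [← norm_mul, hfactor, norm_mul, norm_mul, Complex.norm_real, Complex.norm_two,
          Real.norm_of_nonneg hc]
    _ ≤ 2 * c * ‖1 - z * ω‖ := by
        gcongr
        exact norm_sub_conj_le_norm_one_sub_mul hz.le hω

theorem Complex.norm_one_sub_sq_mul_sub_conj_le_of_neg_lt_re_mul {Q : ℂ → ℂ} {c : ℝ}
    (hc : 0 < c) (hQ : DifferentiableOn ℂ Q (ball 0 1))
    (hre : ∀ z ∈ ball (0 : ℂ) 1, -c < (z * Q z).re) {z : ℂ} (hz : z ∈ ball 0 1) :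
    ‖((1 - ‖z‖ ^ 2 : ℝ) : ℂ) * Q z - 2 * c * conj z‖ ≤ 2 * c := by
  have hden : ∀ w ∈ ball (0 : ℂ) 1, w * Q w + 2 * c ≠ 0 := fun w hw h => by
    have := norm_lt_norm_add_two_mul_of_neg_lt_re hc (hre w hw)
    rw [h, norm_zero] at this
    exact (norm_nonneg _).not_gt this
  set ω : ℂ → ℂ := fun z => Q z / (z * Q z + 2 * c) with hω
  have hωd : DifferentiableOn ℂ ω (ball 0 1) := fun w hw =>
    (hQ w hw).div ((differentiableWithinAt_id.mul (hQ w hw)).add_const _) (hden w hw)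
  have h_maps : MapsTo (fun z => z * ω z) (ball 0 1) (ball 0 1) := fun w hw => by
    rw [mem_ball_zero_iff]
    show ‖w * (Q w / (w * Q w + 2 * c))‖ < 1
    rw [mul_div_assoc', norm_div, div_lt_one (norm_pos_iff.2 (hden w hw))]
    exact norm_lt_norm_add_two_mul_of_neg_lt_re hc (hre w hw)
  refine norm_one_sub_sq_mul_sub_conj_le hc.le (mem_ball_zero_iff.1 hz)
    (norm_le_one_of_mapsTo_ball_mul hωd h_maps hz) ?_
  rw [hω]
  linear_combination -(mul_div_cancel₀ (Q z) (hden z hz))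

theorem convex_order_alpha_preSchwarzian_bound_general
    (f : ℂ → ℂ) (α : ℝ) (hα1 : α < 1)
    (hf : DifferentiableOn ℂ f (Metric.ball 0 1))
    (hf' : ∀ z ∈ Metric.ball (0:ℂ) 1, deriv f z ≠ 0)
    (hconv : ∀ z ∈ Metric.ball (0:ℂ) 1,
      α < (1 + z * (deriv (deriv f) z / deriv f z)).re) :
    ∀ z ∈ Metric.ball (0:ℂ) 1,
      ‖((1 - ‖z‖ ^ 2 : ℝ) : ℂ) * (deriv (deriv f) z / deriv f z)
          - 2 * (1 - (α : ℂ)) * (starRingEnd ℂ) z‖ ≤ 2 * (1 - α) := by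
  have hf'' : DifferentiableOn ℂ (deriv f) (ball 0 1) :=
    (hf.analyticOnNhd isOpen_ball).deriv.differentiableOn
  have hQ : DifferentiableOn ℂ (fun z => deriv (deriv f) z / deriv f z) (ball 0 1) :=
    (hf''.deriv isOpen_ball).div hf'' hf'
  have hre : ∀ w ∈ ball (0 : ℂ) 1, -(1 - α) < (w * (deriv (deriv f) w / deriv f w)).re :=
    fun w hw => by
      have := hconv w hw
      rw [add_re, one_re] at this
      linarith
  intro z hz
  exact_mod_cast norm_one_sub_sq_mul_sub_conj_le_of_neg_lt_re_mul (by linarith) hQ hre hz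

theorem convex_order_alpha_preSchwarzian_bound
    (f : ℂ → ℂ) (α : ℝ) (hα0 : 0 ≤ α) (hα1 : α < 1)
    (hf : DifferentiableOn ℂ f (Metric.ball 0 1))
    (hf' : ∀ z ∈ Metric.ball (0:ℂ) 1, deriv f z ≠ 0)
    (hconv : ∀ z ∈ Metric.ball (0:ℂ) 1,
      α < (1 + z * (deriv (deriv f) z / deriv f z)).re) :
    ∀ z ∈ Metric.ball (0:ℂ) 1,
      ‖((1 - ‖z‖ ^ 2 : ℝ) : ℂ) * (deriv (deriv f) z / deriv f z)
          - 2 * (1 - (α : ℂ)) * (starRingEnd ℂ) z‖ ≤ 2 * (1 - α) :=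
  convex_order_alpha_preSchwarzian_bound_general f α hα1 hf hf' hconv
end

section
/- If f is holomorphic and locally univalent on the unit disk with Re(1 + z f''(z)/f'(z)) ≥ α + (1/(4(1-α)))·(1-|z|²)·|f''(z)/f'(z)|² for all z in the unit disk, where 0 ≤ α < 1, then |(1-|z|²)·f''(z)/f'(z) - 2(1-α)·conj(z)| ≤ 2(1-α) for all z in the unit disk, and conversely. -/
/-!
Put `w = f''(z)/f'(z)`, `β = 1 - α` and `r = 1 - |z|²`. Expanding the square,
`|r w - 2β z̄|² - 4β² = r (r |w|² - 4β (β + Re (z w)))`, because `4β² |z|² = 4β² (1 - r)`.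
As `r > 0`, the second inequality is equivalent to `r |w|² / (4β) ≤ β + Re (z w)`,
which is the first one.
-/

open ComplexConjugate

theorem norm_ofReal_mul_sub_ofReal_mul_conj_sq (r c : ℝ) (w z : ℂ) :
    ‖(r : ℂ) * w - (c : ℂ) * conj z‖ ^ 2
      = r ^ 2 * ‖w‖ ^ 2 - 2 * r * c * (z * w).re + c ^ 2 * ‖z‖ ^ 2 := by
  simp only [Complex.sq_norm, Complex.normSq_sub, Complex.normSq_ofReal, Complex.normSq_conj,
    map_mul, Complex.conj_ofReal, Complex.conj_conj, Complex.mul_re, Complex.ofReal_re,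
    Complex.ofReal_im, Complex.mul_im]
  ring

theorem norm_ofReal_mul_sub_conj_le_iff {β : ℝ} (hβ : 0 < β) {z : ℂ} (hz : ‖z‖ < 1) (w : ℂ) :
    ‖((1 - ‖z‖ ^ 2 : ℝ) : ℂ) * w - ((2 * β : ℝ) : ℂ) * conj z‖ ≤ 2 * β ↔
      (1 - ‖z‖ ^ 2) * ‖w‖ ^ 2 / (4 * β) ≤ β + (z * w).re := by
  set r := 1 - ‖z‖ ^ 2 with hr
  have hr_pos : 0 < r := by nlinarith [norm_nonneg z]
  have hfactor : ‖(r : ℂ) * w - ((2 * β : ℝ) : ℂ) * conj z‖ ^ 2 - (2 * β) ^ 2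
      = r * (r * ‖w‖ ^ 2 - 4 * β * (β + (z * w).re)) := by
    rw [norm_ofReal_mul_sub_ofReal_mul_conj_sq]
    linear_combination (-(2 * β) ^ 2) * hr
  rw [← sq_le_sq₀ (norm_nonneg _) (by positivity), div_le_iff₀ (by positivity), ← sub_nonpos,
    hfactor, ← mul_zero r, mul_le_mul_iff_right₀ hr_pos, sub_nonpos, mul_comm _ (4 * β)]

theorem convex_order_alpha_ineq_equivalence_general
    (f : ℂ → ℂ) (α : ℝ) (hα1 : α < 1) :
    ∀ z ∈ Metric.ball (0:ℂ) 1,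
      (α + (1 / (4 * (1 - α))) * (1 - ‖z‖ ^ 2) *
          ‖deriv (deriv f) z / deriv f z‖ ^ 2
        ≤ (1 + z * (deriv (deriv f) z / deriv f z)).re)
      ↔
      (‖((1 - ‖z‖ ^ 2 : ℝ) : ℂ) * (deriv (deriv f) z / deriv f z)
          - 2 * (1 - (α : ℂ)) * (starRingEnd ℂ) z‖ ≤ 2 * (1 - α)) := by
  intro z hz
  have key := norm_ofReal_mul_sub_conj_le_iff (sub_pos.mpr hα1) (mem_ball_zero_iff.mp hz)
    (deriv (deriv f) z / deriv f z)
  rw [show 2 * (1 - (α : ℂ)) = ((2 * (1 - α) : ℝ) : ℂ) by push_cast; rfl, key,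
    Complex.add_re, Complex.one_re, one_div_mul_eq_div, div_mul_eq_mul_div]
  constructor <;> intro h <;> linarith

theorem convex_order_alpha_ineq_equivalence
    (f : ℂ → ℂ) (α : ℝ) (hα0 : 0 ≤ α) (hα1 : α < 1)
    (hf : DifferentiableOn ℂ f (Metric.ball 0 1))
    (hf' : ∀ z ∈ Metric.ball (0:ℂ) 1, deriv f z ≠ 0) :
    ∀ z ∈ Metric.ball (0:ℂ) 1,
      (α + (1 / (4 * (1 - α))) * (1 - ‖z‖ ^ 2) *
          ‖deriv (deriv f) z / deriv f z‖ ^ 2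
        ≤ (1 + z * (deriv (deriv f) z / deriv f z)).re)
      ↔
      (‖((1 - ‖z‖ ^ 2 : ℝ) : ℂ) * (deriv (deriv f) z / deriv f z)
          - 2 * (1 - (α : ℂ)) * (starRingEnd ℂ) z‖ ≤ 2 * (1 - α)) :=
  convex_order_alpha_ineq_equivalence_general f α hα1
end

section
/- If f is convex of order α (0 ≤ α < 1) on the unit disk and additionally f''(0)=0, then for all z in the unit disk, (1-|z|²)·|f''(z)/f'(z)| ≤ 2|z|(1-α). -/
/-!
Put `p z = z f''(z) / f'(z)`. Convexity of order `α` says `Re p > -(1 - α)`, and `f''(0) = 0` makes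
`p` vanish to second order at `0`. Hence `w = p / (p + 2(1 - α))` maps the disk into itself with a
double zero at `0`, so `|w z| ≤ |z|²` by Schwarz's lemma, and solving `p = 2(1 - α) w / (1 - w)`
gives `(1 - |z|²) |p z| ≤ 2(1 - α) |z|²`.
-/

open Metric Set Complex

theorem Complex.norm_le_mul_div_sq_of_mapsTo_ball {E : Type*} [NormedAddCommGroup E]
    [NormedSpace ℂ E] {f : ℂ → E} {R₁ R₂ : ℝ} {z : ℂ}
    (hd : DifferentiableOn ℂ f (ball 0 R₁)) (h_maps : MapsTo f (ball 0 R₁) (closedBall 0 R₂))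
    (h₀ : f 0 = 0) (h₁ : HasDerivAt f 0 0) (hz : z ∈ ball 0 R₁) :
    ‖f z‖ ≤ R₂ * (‖z‖ / R₁) ^ 2 := by
  have hlittleO : (f · - f 0) =o[nhds 0] (fun w ↦ ‖w - 0‖ ^ 1) := by
    simpa [h₀] using (hasDerivAt_iff_isLittleO.mp h₁).norm_right
  simpa [h₀] using dist_le_mul_div_pow_of_mapsTo_ball_of_isLittleO hd (by rwa [h₀]) hlittleO hz

theorem Complex.norm_lt_norm_add_two_mul_of_neg_lt_re_s4 {ζ : ℂ} {β : ℝ} (hβ : 0 < β)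
    (h : -β < ζ.re) : ‖ζ‖ < ‖ζ + 2 * β‖ := by
  rw [← sq_lt_sq₀ (norm_nonneg _) (norm_nonneg _), ← normSq_eq_norm_sq, ← normSq_eq_norm_sq,
    normSq_apply, normSq_apply]
  simp only [add_re, add_im, mul_re, mul_im, ofReal_re, ofReal_im]
  norm_num
  nlinarith

theorem Complex.one_sub_norm_sq_mul_norm_le_of_neg_lt_re {p : ℂ → ℂ} {β : ℝ} {z : ℂ}
    (hd : DifferentiableOn ℂ p (ball 0 1)) (h₀ : p 0 = 0) (h₁ : HasDerivAt p 0 0)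
    (hre : ∀ ζ ∈ ball (0 : ℂ) 1, -β < (p ζ).re) (hz : z ∈ ball 0 1) :
    (1 - ‖z‖ ^ 2) * ‖p z‖ ≤ 2 * β * ‖z‖ ^ 2 := by
  have hβ : 0 < β := by simpa [h₀] using hre 0 (mem_ball_self one_pos)
  have hlt (ζ : ℂ) (hζ : ζ ∈ ball 0 1) : ‖p ζ‖ < ‖p ζ + 2 * β‖ :=
    norm_lt_norm_add_two_mul_of_neg_lt_re_s4 hβ (hre ζ hζ)
  have hne (ζ : ℂ) (hζ : ζ ∈ ball 0 1) : p ζ + 2 * β ≠ 0 :=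
    norm_pos_iff.mp ((norm_nonneg _).trans_lt (hlt ζ hζ))
  set w : ℂ → ℂ := fun ζ ↦ p ζ / (p ζ + 2 * β)
  have hw_lt (ζ : ℂ) (hζ : ζ ∈ ball 0 1) : ‖w ζ‖ < 1 := by
    simpa [w, norm_div] using (div_lt_one ((norm_nonneg _).trans_lt (hlt ζ hζ))).2 (hlt ζ hζ)
  have hw_sq : ‖w z‖ ≤ ‖z‖ ^ 2 := by
    have hw₁ : HasDerivAt w 0 0 :=
      (h₁.div (h₁.add_const _) (hne 0 (mem_ball_self one_pos))).congr_deriv (by simp [h₀])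
    exact (norm_le_mul_div_sq_of_mapsTo_ball (hd.div (hd.add_const _) hne)
      (fun ζ hζ ↦ mem_closedBall_zero_iff.2 (hw_lt ζ hζ).le) (by simp [h₀]) hw₁ hz).trans_eq
      (by simp)
  have hpw : p z * (1 - w z) = 2 * β * w z := by
    simp only [w]
    field_simp [hne z hz]
    ring
  calc (1 - ‖z‖ ^ 2) * ‖p z‖ ≤ (1 - ‖w z‖) * ‖p z‖ := by gcongr
    _ ≤ ‖1 - w z‖ * ‖p z‖ := by gcongr; simpa using norm_sub_norm_le 1 (w z)
    _ = 2 * β * ‖w z‖ := by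
      rw [mul_comm, ← norm_mul, hpw, norm_mul, norm_mul, Complex.norm_two, norm_real,
        Real.norm_of_nonneg hβ.le]
    _ ≤ 2 * β * ‖z‖ ^ 2 := by gcongr

theorem convex_order_alpha_zero_second_deriv_preSchwarzian_general
    (f : ℂ → ℂ) (α : ℝ)
    (hf : DifferentiableOn ℂ f (Metric.ball 0 1))
    (hf' : ∀ z ∈ Metric.ball (0:ℂ) 1, deriv f z ≠ 0)
    (hf1 : deriv f 0 = 1) (hf2 : deriv (deriv f) 0 = 0)
    (hconv : ∀ z ∈ Metric.ball (0:ℂ) 1,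
      α < (1 + z * (deriv (deriv f) z / deriv f z)).re) :
    ∀ z ∈ Metric.ball (0:ℂ) 1,
      (1 - ‖z‖ ^ 2) * ‖deriv (deriv f) z / deriv f z‖
        ≤ 2 * ‖z‖ * (1 - α) := by
  intro z hz
  set g : ℂ → ℂ := fun ζ ↦ deriv (deriv f) ζ / deriv f ζ
  have hf₁ : AnalyticOnNhd ℂ (deriv f) (ball 0 1) := (hf.analyticOnNhd isOpen_ball).deriv
  have hg : DifferentiableOn ℂ g (ball 0 1) :=
    hf₁.deriv.differentiableOn.div hf₁.differentiableOn hf'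
  have hg₀ : g 0 = 0 := by simp [g, hf1, hf2]
  have hzg : HasDerivAt (fun ζ ↦ ζ * g ζ) 0 0 :=
    ((hasDerivAt_id 0).mul (hg.differentiableAt (ball_mem_nhds 0 one_pos)).hasDerivAt).congr_deriv
      (by simp [hg₀])
  have hre (ζ : ℂ) (hζ : ζ ∈ ball 0 1) : -(1 - α) < (ζ * g ζ).re := by
    have := hconv ζ hζ
    rw [add_re, one_re] at this
    linarith
  have hbound := one_sub_norm_sq_mul_norm_le_of_neg_lt_re (p := fun ζ ↦ ζ * g ζ)
    (differentiableOn_id.mul hg) (zero_mul _) hzg hre hz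
  rcases eq_or_ne z 0 with rfl | hz₀
  · simp [hf1, hf2]
  · refine le_of_mul_le_mul_left ?_ (norm_pos_iff.mpr hz₀)
    calc ‖z‖ * ((1 - ‖z‖ ^ 2) * ‖g z‖) = (1 - ‖z‖ ^ 2) * ‖z * g z‖ := by rw [norm_mul]; ring
      _ ≤ 2 * (1 - α) * ‖z‖ ^ 2 := hbound
      _ = ‖z‖ * (2 * ‖z‖ * (1 - α)) := by ring

theorem convex_order_alpha_zero_second_deriv_preSchwarzian
    (f : ℂ → ℂ) (α : ℝ) (hα0 : 0 ≤ α) (hα1 : α < 1)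
    (hf : DifferentiableOn ℂ f (Metric.ball 0 1))
    (hf' : ∀ z ∈ Metric.ball (0:ℂ) 1, deriv f z ≠ 0)
    (hf0 : f 0 = 0) (hf1 : deriv f 0 = 1) (hf2 : deriv (deriv f) 0 = 0)
    (hconv : ∀ z ∈ Metric.ball (0:ℂ) 1,
      α < (1 + z * (deriv (deriv f) z / deriv f z)).re) :
    ∀ z ∈ Metric.ball (0:ℂ) 1,
      (1 - ‖z‖ ^ 2) * ‖deriv (deriv f) z / deriv f z‖
        ≤ 2 * ‖z‖ * (1 - α) :=
  convex_order_alpha_zero_second_deriv_preSchwarzian_general f α hf hf' hf1 hf2 hconv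
end

section
/- If f is convex of order α (0 ≤ α < 1) on the unit disk with f''(0)=0, then for all z in the unit disk, |f(z)| ≤ ∫₀^{|z|} (1-t²)^{-(1-α)} dt. -/
/-!
Write `c = 1 - α` and `h z = z f''(z) / f'(z)`. Then `Re h > -c`, and `f''(0) = 0` makes `h`
vanish to second order at `0`, so the Cayley-type map `ω = h / (h + 2c)` sends the disk into
itself with a double zero at the origin. Schwarz's lemma applied twice gives `|ω z| ≤ |z|²`,
and solving for `h` yields `Re h(z) ≤ 2c|z|² / (1 - |z|²)`. Along the segment `t ↦ t z` this
bounds the derivative of `log |f'(t z)|` by that of `-c log (1 - t²|z|²)`, hence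
`|f'(z)| ≤ (1 - |z|²)^(-c)`; integrating `f'` along the radius bounds `|f z|`.
-/

open Metric Set

theorem Complex.norm_lt_norm_add_two_mul {w : ℂ} {c : ℝ} (hc : 0 < c) (hw : -c < w.re) :
    ‖w‖ < ‖w + 2 * c‖ := by
  rw [← sq_lt_sq₀ (norm_nonneg _) (norm_nonneg _), ← Complex.normSq_eq_norm_sq,
    ← Complex.normSq_eq_norm_sq]
  simp only [Complex.normSq_apply, Complex.add_re, Complex.add_im, Complex.mul_re,
    Complex.mul_im, Complex.ofReal_re, Complex.ofReal_im]
  norm_num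
  nlinarith

theorem Complex.norm_le_norm_sq_of_mapsTo_ball {ω : ℂ → ℂ} (hd : DifferentiableOn ℂ ω (ball 0 1))
    (h_maps : MapsTo ω (ball 0 1) (closedBall 0 1)) (h₀ : ω 0 = 0) (h₁ : deriv ω 0 = 0)
    {z : ℂ} (hz : z ∈ ball 0 1) : ‖ω z‖ ≤ ‖z‖ ^ 2 := by
  have hg : DifferentiableOn ℂ (dslope ω 0) (ball 0 1) :=
    (Complex.differentiableOn_dslope (ball_mem_nhds _ one_pos)).2 hd
  have hg_maps : MapsTo (dslope ω 0) (ball 0 1) (closedBall 0 1) := fun w hw ↦ by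
    simpa using Complex.norm_dslope_le_div_of_mapsTo_ball hd (by rwa [h₀]) hw
  have hgz : ‖dslope ω 0 z‖ ≤ ‖z‖ :=
    Complex.norm_le_norm_of_mapsTo_ball hg hg_maps (by simpa using h₁) (mem_ball_zero_iff.1 hz)
  calc ‖ω z‖ = ‖z‖ * ‖dslope ω 0 z‖ := by
        simpa [h₀, norm_smul] using congrArg norm (sub_smul_dslope ω 0 z).symm
    _ ≤ ‖z‖ ^ 2 := by rw [sq]; gcongr

theorem re_le_of_forall_neg_lt_re {h : ℂ → ℂ} {c : ℝ} (hc : 0 < c)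
    (hd : DifferentiableOn ℂ h (ball 0 1)) (h₀ : h 0 = 0) (h₁ : deriv h 0 = 0)
    (hre : ∀ z ∈ ball (0 : ℂ) 1, -c < (h z).re) {z : ℂ} (hz : z ∈ ball 0 1) :
    (h z).re ≤ 2 * c * ‖z‖ ^ 2 / (1 - ‖z‖ ^ 2) := by
  have hden (w) (hw : w ∈ ball (0 : ℂ) 1) : h w + 2 * c ≠ 0 := norm_pos_iff.1 <|
    (norm_nonneg _).trans_lt (Complex.norm_lt_norm_add_two_mul hc (hre w hw))
  set ω : ℂ → ℂ := fun w ↦ h w / (h w + 2 * c)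
  have hlt (w) (hw : w ∈ ball (0 : ℂ) 1) : ‖ω w‖ < 1 := by
    rw [norm_div, div_lt_one (norm_pos_iff.2 (hden w hw))]
    exact Complex.norm_lt_norm_add_two_mul hc (hre w hw)
  have hω₁ : deriv ω 0 = 0 := by
    have hh := (hd.differentiableAt (ball_mem_nhds _ one_pos)).hasDerivAt
    rw [h₁] at hh
    have hω : HasDerivAt ω _ 0 := hh.div (hh.add_const _) (hden 0 (mem_ball_self one_pos))
    simpa [h₀] using hω.deriv
  have hωz : ‖ω z‖ ≤ ‖z‖ ^ 2 :=
    Complex.norm_le_norm_sq_of_mapsTo_ball (hd.div (hd.add_const _) hden)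
      (fun w hw ↦ mem_closedBall_zero_iff.2 (hlt w hw).le) (by simp [h₀]) hω₁ hz
  have hz1 : ‖z‖ ^ 2 < 1 := by
    have := mem_ball_zero_iff.1 hz
    nlinarith [norm_nonneg z]
  have hinv : h z = 2 * c * ω z / (1 - ω z) := by
    have hne : 1 - ω z ≠ 0 := fun h1 ↦ by simpa [← sub_eq_zero.1 h1] using hlt z hz
    rw [eq_div_iff hne]
    simp only [ω]
    field_simp [hden z hz]
    ring
  calc (h z).re ≤ ‖h z‖ := Complex.re_le_norm _
    _ ≤ 2 * c * ‖ω z‖ / (1 - ‖ω z‖) := by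
        rw [hinv, norm_div, norm_mul, norm_mul]
        simp only [Complex.norm_ofNat, Complex.norm_real, Real.norm_of_nonneg hc.le]
        gcongr
        · linarith [hlt z hz]
        · simpa using norm_sub_norm_le (1 : ℂ) (ω z)
    _ ≤ 2 * c * ‖z‖ ^ 2 / (1 - ‖z‖ ^ 2) := by gcongr

theorem re_mul_deriv_div_le_of_lt_re {g : ℂ → ℂ} {α : ℝ} (hα : α < 1)
    (hg : DifferentiableOn ℂ g (ball 0 1)) (hg₀ : ∀ z ∈ ball (0 : ℂ) 1, g z ≠ 0)
    (hg₁ : deriv g 0 = 0) (hconv : ∀ z ∈ ball (0 : ℂ) 1, α < (1 + z * (deriv g z / g z)).re)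
    {z : ℂ} (hz : z ∈ ball 0 1) :
    (z * (deriv g z / g z)).re ≤ 2 * (1 - α) * ‖z‖ ^ 2 / (1 - ‖z‖ ^ 2) := by
  have hq : DifferentiableOn ℂ (fun w ↦ deriv g w / g w) (ball 0 1) :=
    (hg.deriv isOpen_ball).div hg hg₀
  refine re_le_of_forall_neg_lt_re (sub_pos.2 hα) (differentiableOn_id.mul hq) (by simp) ?_
    (fun w hw ↦ ?_) hz
  · have hq₀ := (hq.differentiableAt (ball_mem_nhds _ one_pos)).hasDerivAt
    simpa [hg₁] using ((hasDerivAt_id (0 : ℂ)).mul hq₀).deriv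
  · have := hconv w hw
    rw [Complex.add_re, Complex.one_re] at this
    change -(1 - α) < (w * (deriv g w / g w)).re
    linarith

theorem HasDerivAt.log_norm {w : ℝ → ℂ} {w' : ℂ} {t : ℝ} (hw : HasDerivAt w w' t)
    (h₀ : w t ≠ 0) : HasDerivAt (fun s ↦ Real.log ‖w s‖) (w' / w t).re t := by
  have hsq : (fun s ↦ Real.log ‖w s‖) = fun s ↦ Real.log (‖w s‖ ^ 2) / 2 := by
    funext s; rw [Real.log_pow]; push_cast; ring
  have hpos : ‖w t‖ ^ 2 ≠ 0 := by positivity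
  rw [hsq]
  refine ((hw.norm_sq.log hpos).div_const 2).congr_deriv ?_
  rw [Complex.inner, Complex.div_re, ← Complex.normSq_eq_norm_sq]
  simp only [Complex.mul_re, Complex.conj_re, Complex.conj_im]
  field_simp
  ring

theorem log_norm_sub_log_norm_le {w w' : ℝ → ℂ} {φ φ' : ℝ → ℝ} {a b : ℝ} (hab : a ≤ b)
    (hw : ∀ t ∈ Icc a b, HasDerivAt w (w' t) t) (hw₀ : ∀ t ∈ Icc a b, w t ≠ 0)
    (hφ : ∀ t ∈ Icc a b, HasDerivAt φ (φ' t) t) (hle : ∀ t ∈ Ioo a b, (w' t / w t).re ≤ φ' t) :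
    Real.log ‖w b‖ - Real.log ‖w a‖ ≤ φ b - φ a := by
  have hderiv : ∀ t ∈ Icc a b,
      HasDerivAt (fun s ↦ φ s - Real.log ‖w s‖) (φ' t - (w' t / w t).re) t := fun t ht ↦
    (hφ t ht).sub ((hw t ht).log_norm (hw₀ t ht))
  have hmono : MonotoneOn (fun s ↦ φ s - Real.log ‖w s‖) (Icc a b) := by
    refine monotoneOn_of_hasDerivWithinAt_nonneg (convex_Icc a b)
      (f' := fun t ↦ φ' t - (w' t / w t).re)
      (fun t ht ↦ (hderiv t ht).continuousAt.continuousWithinAt) (fun t ht ↦ ?_) (fun t ht ↦ ?_)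
    · rw [interior_Icc] at ht
      exact (hderiv t (Ioo_subset_Icc_self ht)).hasDerivWithinAt
    · rw [interior_Icc] at ht
      exact sub_nonneg.2 (hle t ht)
  have := hmono (left_mem_Icc.2 hab) (right_mem_Icc.2 hab) hab
  linarith

theorem HasDerivAt.comp_ofReal_mul {E : Type*} [NormedAddCommGroup E] [NormedSpace ℂ E]
    {F : ℂ → E} {F' : E} {z : ℂ} {t : ℝ}
    (hF : HasDerivAt F F' (t * z)) : HasDerivAt (fun s : ℝ ↦ F (s * z)) (z • F') t := by
  have hray : HasDerivAt (fun s : ℝ ↦ (s : ℂ) * z) z t := by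
    simpa using (hasDerivAt_id t).ofReal_comp.mul_const z
  exact hF.scomp t hray

theorem Complex.ofReal_mul_mem_ball_zero {z : ℂ} {r t : ℝ} (hz : z ∈ ball 0 r)
    (ht : t ∈ Icc (0 : ℝ) 1) : (t : ℂ) * z ∈ ball 0 r := by
  simpa [Complex.real_smul] using
    (convex_ball (0 : ℂ) r).smul_mem_of_zero_mem (mem_ball_self (pos_of_mem_ball hz)) hz ht

theorem norm_le_mul_rpow_of_re_mul_deriv_div_le {g : ℂ → ℂ} {c : ℝ}
    (hg : DifferentiableOn ℂ g (ball 0 1)) (hg₀ : ∀ z ∈ ball (0 : ℂ) 1, g z ≠ 0)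
    (hre : ∀ z ∈ ball (0 : ℂ) 1, (z * (deriv g z / g z)).re ≤ 2 * c * ‖z‖ ^ 2 / (1 - ‖z‖ ^ 2))
    {z : ℂ} (hz : z ∈ ball 0 1) :
    ‖g z‖ ≤ ‖g 0‖ * (1 - ‖z‖ ^ 2) ^ (-c) := by
  have hray (t) (ht : t ∈ Icc (0 : ℝ) 1) := Complex.ofReal_mul_mem_ball_zero hz ht
  have hpos : ∀ t ∈ Icc (0 : ℝ) 1, 0 < 1 - ‖z‖ ^ 2 * t ^ 2 := fun t ht ↦ by
    have := mem_ball_zero_iff.1 (hray t ht)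
    rw [norm_mul, Complex.norm_real, Real.norm_of_nonneg ht.1] at this
    nlinarith [mul_nonneg ht.1 (norm_nonneg z)]
  have hlog := log_norm_sub_log_norm_le zero_le_one
    (w := fun t : ℝ ↦ g (t * z)) (w' := fun t ↦ z • deriv g (t * z))
    (φ := fun t ↦ -c * Real.log (1 - ‖z‖ ^ 2 * t ^ 2))
    (φ' := fun t ↦ 2 * c * ‖z‖ ^ 2 * t / (1 - ‖z‖ ^ 2 * t ^ 2))
    (fun t ht ↦
      (hg.differentiableAt (isOpen_ball.mem_nhds (hray t ht))).hasDerivAt.comp_ofReal_mul)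
    (fun t ht ↦ hg₀ _ (hray t ht))
    (fun t ht ↦ by
      refine ((((hasDerivAt_pow 2 t).const_mul (‖z‖ ^ 2)).const_sub 1).log
        (hpos t ht).ne' |>.const_mul (-c)).congr_deriv ?_
      field_simp
      ring)
    (fun t ht ↦ by
      have key := hre _ (hray t (Ioo_subset_Icc_self ht))
      rw [mul_assoc, Complex.re_ofReal_mul, norm_mul, Complex.norm_real,
        Real.norm_of_nonneg ht.1.le] at key
      rw [smul_eq_mul, mul_div_assoc, ← mul_le_mul_iff_of_pos_left ht.1]
      refine key.trans_eq ?_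
      ring)
  have h1 : 0 < 1 - ‖z‖ ^ 2 := by simpa using hpos 1 (right_mem_Icc.2 zero_le_one)
  have hg0 : 0 < ‖g 0‖ := norm_pos_iff.2 (hg₀ 0 (mem_ball_self one_pos))
  norm_num at hlog
  rw [← Real.log_le_log_iff (norm_pos_iff.2 (hg₀ z hz)) (by positivity), Real.log_mul hg0.ne'
    (by positivity), Real.log_rpow h1]
  linarith

theorem norm_sub_le_integral_of_norm_deriv_le {E : Type*} [NormedAddCommGroup E] [NormedSpace ℂ E]
    [CompleteSpace E] {f : ℂ → E} {ρ : ℝ → ℝ}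
    (hf : DifferentiableOn ℂ f (ball 0 1)) (hρ : ContinuousOn ρ (Ico 0 1))
    (hbound : ∀ z ∈ ball (0 : ℂ) 1, ‖deriv f z‖ ≤ ρ ‖z‖) {z : ℂ} (hz : z ∈ ball 0 1) :
    ‖f z - f 0‖ ≤ ∫ t in (0 : ℝ)..‖z‖, ρ t := by
  have hray (t) (ht : t ∈ Icc (0 : ℝ) 1) := Complex.ofReal_mul_mem_ball_zero hz ht
  have hderiv : ∀ t ∈ uIcc (0 : ℝ) 1,
      HasDerivAt (fun s : ℝ ↦ f (s * z)) (z • deriv f (t * z)) t := fun t ht ↦ by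
    rw [uIcc_of_le zero_le_one] at ht
    exact (hf.differentiableAt (isOpen_ball.mem_nhds (hray t ht))).hasDerivAt.comp_ofReal_mul
  have hcont : ContinuousOn (fun t : ℝ ↦ z • deriv f (t * z)) (uIcc 0 1) := by
    rw [uIcc_of_le zero_le_one]
    exact continuousOn_const.smul ((hf.deriv isOpen_ball).continuousOn.comp
      (Complex.continuous_ofReal.mul continuous_const).continuousOn hray)
  have hρray : ContinuousOn (fun t : ℝ ↦ ‖z‖ * ρ (‖z‖ * t)) (uIcc 0 1) := by
    rw [uIcc_of_le zero_le_one]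
    refine continuousOn_const.mul (hρ.comp (continuous_const.mul continuous_id).continuousOn ?_)
    intro t ht
    exact ⟨mul_nonneg (norm_nonneg z) ht.1,
      (mul_le_of_le_one_right (norm_nonneg z) ht.2).trans_lt (mem_ball_zero_iff.1 hz)⟩
  calc ‖f z - f 0‖ = ‖∫ t in (0 : ℝ)..1, z • deriv f (t * z)‖ := by
        rw [intervalIntegral.integral_eq_sub_of_hasDerivAt hderiv (hcont.intervalIntegrable)]
        simp
    _ ≤ ∫ t in (0 : ℝ)..1, ‖z‖ * ρ (‖z‖ * t) := by
        refine intervalIntegral.norm_integral_le_of_norm_le zero_le_one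
          (Filter.Eventually.of_forall fun t ht ↦ ?_) hρray.intervalIntegrable
        rw [norm_smul]
        gcongr
        simpa [norm_mul, abs_of_pos ht.1, mul_comm] using
          hbound _ (hray t (Ioc_subset_Icc_self ht))
    _ = ∫ t in (0 : ℝ)..‖z‖, ρ t := by
        rw [intervalIntegral.integral_const_mul, intervalIntegral.mul_integral_comp_mul_left,
          mul_zero, mul_one]

theorem convex_order_alpha_zero_second_deriv_growth_upper_general
    (f : ℂ → ℂ) (α : ℝ) (hα1 : α < 1)
    (hf : DifferentiableOn ℂ f (Metric.ball 0 1))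
    (hf' : ∀ z ∈ Metric.ball (0:ℂ) 1, deriv f z ≠ 0)
    (hf0 : f 0 = 0) (hf1 : deriv f 0 = 1) (hf2 : deriv (deriv f) 0 = 0)
    (hconv : ∀ z ∈ Metric.ball (0:ℂ) 1,
      α < (1 + z * (deriv (deriv f) z / deriv f z)).re) :
    ∀ z ∈ Metric.ball (0:ℂ) 1,
      ‖f z‖ ≤ ∫ t in (0:ℝ)..(‖z‖), (1 - t ^ 2) ^ (-(1 - α)) := by
  have hf'' : DifferentiableOn ℂ (deriv f) (ball 0 1) := hf.deriv isOpen_ball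
  have hderiv : ∀ z ∈ ball (0 : ℂ) 1, ‖deriv f z‖ ≤ (1 - ‖z‖ ^ 2) ^ (-(1 - α)) := fun z hz ↦ by
    simpa [hf1] using norm_le_mul_rpow_of_re_mul_deriv_div_le hf'' hf'
      (fun w hw ↦ re_mul_deriv_div_le_of_lt_re hα1 hf'' hf' hf2 hconv hw) hz
  have hρ : ContinuousOn (fun t : ℝ ↦ (1 - t ^ 2) ^ (-(1 - α))) (Ico 0 1) :=
    ((continuous_const.sub (continuous_pow 2)).continuousOn).rpow_const fun t ht ↦
      Or.inl (by simp only [Pi.sub_apply]; nlinarith [ht.1, ht.2])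
  intro z hz
  simpa [hf0] using norm_sub_le_integral_of_norm_deriv_le hf hρ hderiv hz

theorem convex_order_alpha_zero_second_deriv_growth_upper
    (f : ℂ → ℂ) (α : ℝ) (hα0 : 0 ≤ α) (hα1 : α < 1)
    (hf : DifferentiableOn ℂ f (Metric.ball 0 1))
    (hf' : ∀ z ∈ Metric.ball (0:ℂ) 1, deriv f z ≠ 0)
    (hf0 : f 0 = 0) (hf1 : deriv f 0 = 1) (hf2 : deriv (deriv f) 0 = 0)
    (hconv : ∀ z ∈ Metric.ball (0:ℂ) 1,
      α < (1 + z * (deriv (deriv f) z / deriv f z)).re) :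
    ∀ z ∈ Metric.ball (0:ℂ) 1,
      ‖f z‖ ≤ ∫ t in (0:ℝ)..(‖z‖), (1 - t ^ 2) ^ (-(1 - α)) :=
  convex_order_alpha_zero_second_deriv_growth_upper_general f α hα1 hf hf' hf0 hf1 hf2 hconv
end

section
/- If f is convex of order α (0 ≤ α < 1) on the unit disk with f''(0)=0, then for all z in the unit disk, (1-|z|²)²·|Sf(z)| ≤ 2(1-α²), where Sf = (f''/f')' - (1/2)(f''/f')² is the Schwarzian derivative. -/
open Metric Set Filter Topology ComplexConjugate

/-!
Write `q = f''/f'`, so that `Sf = q' - q²/2` and the hypothesis says that `z q` lies in the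
half-plane `Re w > α - 1`. The map `w ↦ w / (w + 2(1 - α))` sends this half-plane into the unit
disk, so `ω = z q / (z q + 2(1 - α))` is a self-map of the disk; since `q(0) = f''(0) = 0` it
vanishes to second order at `0`, and the Schwarz lemma gives `ω = z² φ` with `|φ| ≤ 1`.
Solving for `q` and differentiating yields
`Sf · (1 - z² φ)² = 2(1 - α) (φ + z φ' + α z² φ²)`,
and the Schwarz–Pick bound `|φ'| (1 - |z|²) ≤ 1 - |φ|²` reduces the claim to a polynomial
inequality in `|z|`, `|φ|` and `|φ'|`.
-/

lemma sq_one_sub_sq_mul_le_of_mul_one_sub_sq_le {α r t d : ℝ} (hα : 0 ≤ α) (hr0 : 0 ≤ r)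
    (hr1 : r ≤ 1) (ht0 : 0 ≤ t) (ht1 : t ≤ 1) (hd : d * (1 - r ^ 2) ≤ 1 - t ^ 2) :
    (1 - r ^ 2) ^ 2 * (t + r * d + α * r ^ 2 * t ^ 2) ≤ (1 + α) * (1 - r ^ 2 * t) ^ 2 := by
  have hr2 : 0 ≤ 1 - r ^ 2 := by nlinarith
  have ht : 0 ≤ 1 - t := by linarith
  have h₀ : t * (1 - r ^ 2) ^ 2 + r * (1 - r ^ 2) * (1 - t ^ 2) ≤ (1 - r ^ 2 * t) ^ 2 := by
    have : 0 ≤ (1 - t) * ((1 - t) * (1 - r + r ^ 3) + t * ((1 - r ^ 2) * (1 - r) ^ 2)) :=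
      mul_nonneg ht <| add_nonneg (mul_nonneg ht (by nlinarith [pow_nonneg hr0 3]))
        (mul_nonneg ht0 (mul_nonneg hr2 (sq_nonneg _)))
    linear_combination this
  have h₁ : r * t * (1 - r ^ 2) ≤ 1 - r ^ 2 * t := by
    have : 0 ≤ t * ((1 - r) ^ 2 * (1 + r)) :=
      mul_nonneg ht0 (mul_nonneg (sq_nonneg _) (by linarith))
    linear_combination ht + this
  calc (1 - r ^ 2) ^ 2 * (t + r * d + α * r ^ 2 * t ^ 2)
      = t * (1 - r ^ 2) ^ 2 + r * (1 - r ^ 2) * (d * (1 - r ^ 2))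
          + α * (r * t * (1 - r ^ 2)) ^ 2 := by ring
    _ ≤ t * (1 - r ^ 2) ^ 2 + r * (1 - r ^ 2) * (1 - t ^ 2) + α * (1 - r ^ 2 * t) ^ 2 := by
      gcongr
    _ ≤ (1 + α) * (1 - r ^ 2 * t) ^ 2 := by linear_combination h₀

namespace Complex

noncomputable def blaschkeFactor (a u : ℂ) : ℂ := (u - a) / (1 - conj a * u)

section blaschkeFactor

variable {a u : ℂ}

lemma sq_norm_one_sub_conj_mul_sub_sq_norm_sub (a u : ℂ) :
    ‖1 - conj a * u‖ ^ 2 - ‖u - a‖ ^ 2 = (1 - ‖a‖ ^ 2) * (1 - ‖u‖ ^ 2) := by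
  simp only [Complex.sq_norm, normSq_apply, sub_re, sub_im, mul_re, mul_im, conj_re, conj_im,
    one_re, one_im]
  ring

lemma one_sub_conj_mul_ne_zero (ha : ‖a‖ < 1) (hu : ‖u‖ ≤ 1) : 1 - conj a * u ≠ 0 := by
  refine sub_ne_zero.2 fun h => ?_
  have : ‖conj a * u‖ < 1 := by
    rw [norm_mul, norm_conj]
    exact mul_lt_one_of_nonneg_of_lt_one_left (norm_nonneg a) ha hu
  rw [← h, norm_one] at this
  exact this.false

lemma norm_blaschkeFactor_le_one (ha : ‖a‖ < 1) (hu : ‖u‖ ≤ 1) : ‖blaschkeFactor a u‖ ≤ 1 := by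
  rw [blaschkeFactor, norm_div, div_le_one (norm_pos_iff.2 (one_sub_conj_mul_ne_zero ha hu)),
    ← sq_le_sq₀ (norm_nonneg _) (norm_nonneg _)]
  have := sq_norm_one_sub_conj_mul_sub_sq_norm_sub a u
  have : 0 ≤ (1 - ‖a‖ ^ 2) * (1 - ‖u‖ ^ 2) :=
    mul_nonneg (by nlinarith [norm_nonneg a]) (by nlinarith [norm_nonneg u])
  linarith

lemma norm_blaschkeFactor_lt_one (ha : ‖a‖ < 1) (hu : ‖u‖ < 1) : ‖blaschkeFactor a u‖ < 1 := by
  rw [blaschkeFactor, norm_div, div_lt_one (norm_pos_iff.2 (one_sub_conj_mul_ne_zero ha hu.le)),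
    ← sq_lt_sq₀ (norm_nonneg _) (norm_nonneg _)]
  have := sq_norm_one_sub_conj_mul_sub_sq_norm_sub a u
  have : 0 < (1 - ‖a‖ ^ 2) * (1 - ‖u‖ ^ 2) :=
    mul_pos (by nlinarith [norm_nonneg a]) (by nlinarith [norm_nonneg u])
  linarith

@[simp] lemma blaschkeFactor_self (a : ℂ) : blaschkeFactor a a = 0 := by simp [blaschkeFactor]

@[simp] lemma blaschkeFactor_neg_zero (a : ℂ) : blaschkeFactor (-a) 0 = a := by
  simp [blaschkeFactor]

lemma one_sub_conj_mul_self (a : ℂ) : 1 - conj a * a = ((1 - ‖a‖ ^ 2 : ℝ) : ℂ) := by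
  rw [conj_mul']
  push_cast
  ring

lemma hasDerivAt_blaschkeFactor (h : 1 - conj a * u ≠ 0) :
    HasDerivAt (blaschkeFactor a) ((1 - conj a * a) / (1 - conj a * u) ^ 2) u := by
  have := ((hasDerivAt_id u).sub_const a).div
    (((hasDerivAt_id u).const_mul (conj a)).const_sub 1) h
  simp only [id, mul_one] at this
  refine this.congr_deriv ?_
  field_simp
  ring

lemma hasDerivAt_blaschkeFactor_self (ha : ‖a‖ < 1) :
    HasDerivAt (blaschkeFactor a) ((1 - ‖a‖ ^ 2 : ℝ) : ℂ)⁻¹ a := by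
  have h := one_sub_conj_mul_ne_zero ha ha.le
  refine (hasDerivAt_blaschkeFactor h).congr_deriv ?_
  rw [← one_sub_conj_mul_self]
  field_simp

lemma hasDerivAt_blaschkeFactor_zero (a : ℂ) :
    HasDerivAt (blaschkeFactor a) ((1 - ‖a‖ ^ 2 : ℝ) : ℂ) 0 := by
  refine (hasDerivAt_blaschkeFactor (by simp)).congr_deriv ?_
  rw [← one_sub_conj_mul_self]
  simp

end blaschkeFactor

lemma norm_lt_norm_add_ofReal {w : ℂ} {c : ℝ} (hc : 0 < c) (hw : -(c / 2) < w.re) :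
    ‖w‖ < ‖w + c‖ := by
  rw [norm_def, norm_def]
  refine Real.sqrt_lt_sqrt (normSq_nonneg _) ?_
  simp only [normSq_apply, add_re, add_im, ofReal_re, ofReal_im, add_zero]
  nlinarith

/-- The Schwarz–Pick lemma. -/
theorem norm_deriv_mul_le_of_mapsTo_closedBall {g : ℂ → ℂ} (hg : DifferentiableOn ℂ g (ball 0 1))
    (hmaps : MapsTo g (ball 0 1) (closedBall 0 1)) {z : ℂ} (hz : z ∈ ball (0 : ℂ) 1) :
    ‖deriv g z‖ * (1 - ‖z‖ ^ 2) ≤ 1 - ‖g z‖ ^ 2 := by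
  have hz1 : ‖z‖ < 1 := mem_ball_zero_iff.1 hz
  rcases (mem_closedBall_zero_iff.1 (hmaps hz)).lt_or_eq with ha | hgz
  · set a := g z
    set σ := blaschkeFactor (-z)
    have hσ : MapsTo σ (ball 0 1) (ball 0 1) := fun w hw =>
      mem_ball_zero_iff.2 (norm_blaschkeFactor_lt_one (by simpa using hz1) (mem_ball_zero_iff.1 hw))
    have hχ : DifferentiableOn ℂ (blaschkeFactor a ∘ g ∘ σ) (ball 0 1) := by
      intro w hw
      have hgσ := mem_closedBall_zero_iff.1 (hmaps (hσ hw))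
      refine DifferentiableAt.differentiableWithinAt ?_
      refine (hasDerivAt_blaschkeFactor (one_sub_conj_mul_ne_zero ha hgσ)).differentiableAt.comp w
        (((hg _ (hσ hw)).differentiableAt (isOpen_ball.mem_nhds (hσ hw))).comp w ?_)
      exact (hasDerivAt_blaschkeFactor (one_sub_conj_mul_ne_zero (by simpa using hz1)
        (mem_ball_zero_iff.1 hw).le)).differentiableAt
    have hχ0 : (blaschkeFactor a ∘ g ∘ σ) 0 = 0 := by simp [σ, a]
    have hχmaps : MapsTo (blaschkeFactor a ∘ g ∘ σ) (ball 0 1)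
        (closedBall ((blaschkeFactor a ∘ g ∘ σ) 0) 1) := fun w hw => by
      rw [hχ0, mem_closedBall_zero_iff]
      exact norm_blaschkeFactor_le_one ha (mem_closedBall_zero_iff.1 (hmaps (hσ hw)))
    have hderiv : HasDerivAt (blaschkeFactor a ∘ g ∘ σ)
        (((1 - ‖a‖ ^ 2 : ℝ) : ℂ)⁻¹ * (deriv g z * ((1 - ‖z‖ ^ 2 : ℝ) : ℂ))) 0 := by
      have hσ0 : σ 0 = z := blaschkeFactor_neg_zero z
      have hσ' := hasDerivAt_blaschkeFactor_zero (-z)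
      rw [norm_neg] at hσ'
      have hgz := ((hg z hz).differentiableAt (isOpen_ball.mem_nhds hz)).hasDerivAt
      exact (hasDerivAt_blaschkeFactor_self ha).comp_of_eq 0
        (hgz.comp_of_eq 0 hσ' hσ0.symm) (by simp [hσ0, a])
    have hschwarz := norm_deriv_le_div_of_mapsTo_ball hχ hχmaps one_pos
    have hpos : 0 < 1 - ‖a‖ ^ 2 := by nlinarith [norm_nonneg a]
    rw [hderiv.deriv, norm_mul, norm_mul, norm_inv, norm_real, norm_real, Real.norm_of_nonneg
      hpos.le, Real.norm_of_nonneg (by nlinarith [norm_nonneg z]), div_one,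
      inv_mul_le_iff₀ hpos, mul_one] at hschwarz
    exact hschwarz
  · have hconst : g =ᶠ[𝓝 z] fun _ => g z := by
      refine eventually_eq_of_isLocalMax_norm ?_ ?_
      · filter_upwards [isOpen_ball.mem_nhds hz] with w hw
        exact (hg w hw).differentiableAt (isOpen_ball.mem_nhds hw)
      · filter_upwards [isOpen_ball.mem_nhds hz] with w hw
        simpa [hgz] using hmaps hw
    rw [hconst.deriv_eq, deriv_const, hgz]
    simp

end Complex

lemma mapsTo_closedBall_of_mapsTo_id_mul {ψ : ℂ → ℂ} (hψ : DifferentiableOn ℂ ψ (ball 0 1))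
    (h : MapsTo (fun w => w * ψ w) (ball 0 1) (closedBall 0 1)) :
    MapsTo ψ (ball 0 1) (closedBall 0 1) := by
  have hω : DifferentiableOn ℂ (fun w => w * ψ w) (ball 0 1) := differentiableOn_id.mul hψ
  have hdslope : ∀ w, dslope (fun w => w * ψ w) 0 w = ψ w := by
    intro w
    rcases eq_or_ne w 0 with rfl | hw
    · have h₀ := ((hasDerivAt_id' 0).mul ((hψ 0 (mem_ball_self one_pos)).differentiableAt
        (ball_mem_nhds 0 one_pos)).hasDerivAt).deriv
      simp only [one_mul, zero_mul, add_zero] at h₀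
      rw [dslope_same]
      exact h₀
    · rw [dslope_of_ne _ hw, slope_def_field]
      field_simp
      ring
  intro w hw
  have := Complex.norm_dslope_le_div_of_mapsTo_ball hω (by simpa using h) hw
  rw [hdslope, div_one] at this
  exact mem_closedBall_zero_iff.2 this

theorem exists_mul_one_sub_sq_mul_eq_of_lt_re {q : ℂ → ℂ} {α : ℝ} (hα : α < 1)
    (hq : DifferentiableOn ℂ q (ball 0 1)) (hq0 : q 0 = 0)
    (hre : ∀ z ∈ ball (0 : ℂ) 1, α < (1 + z * q z).re) :
    ∃ φ : ℂ → ℂ, DifferentiableOn ℂ φ (ball 0 1) ∧ MapsTo φ (ball 0 1) (closedBall 0 1) ∧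
      ∀ z ∈ ball (0 : ℂ) 1, q z * (1 - z ^ 2 * φ z) = ((2 * (1 - α) : ℝ) : ℂ) * z * φ z := by
  set c : ℝ := 2 * (1 - α)
  have hnorm : ∀ z ∈ ball (0 : ℂ) 1, ‖z * q z‖ < ‖z * q z + c‖ := fun z hz =>
    Complex.norm_lt_norm_add_ofReal (by simp [c]; linarith) <| by
      have := hre z hz
      simp only [Complex.add_re, Complex.one_re] at this
      linarith
  have hne : ∀ z ∈ ball (0 : ℂ) 1, z * q z + c ≠ 0 := fun z hz h => by
    have := hnorm z hz
    rw [h, norm_zero] at this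
    exact (norm_nonneg _).not_gt this
  -- `z ψ = z q / (z q + c)` maps the disk into itself, and `φ = ψ / z`.
  set ψ : ℂ → ℂ := fun z => q z / (z * q z + c)
  have hψ : DifferentiableOn ℂ ψ (ball 0 1) :=
    hq.div ((differentiableOn_id.mul hq).add_const _) hne
  have hψ0 : ψ 0 = 0 := by simp [ψ, hq0]
  have hψmaps : MapsTo ψ (ball 0 1) (closedBall 0 1) := by
    refine mapsTo_closedBall_of_mapsTo_id_mul hψ fun z hz => ?_
    rw [mem_closedBall_zero_iff]
    change ‖z * (q z / (z * q z + c))‖ ≤ 1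
    rw [← mul_div_assoc, norm_div, div_le_one (norm_pos_iff.2 (hne z hz))]
    exact (hnorm z hz).le
  refine ⟨dslope ψ 0, (Complex.differentiableOn_dslope (ball_mem_nhds 0 one_pos)).2 hψ,
    fun z hz => ?_, fun z hz => ?_⟩
  · have := Complex.norm_dslope_le_div_of_mapsTo_ball hψ (by rwa [hψ0]) hz
    rw [div_one] at this
    exact mem_closedBall_zero_iff.2 this
  · have hzψ : z * dslope ψ 0 z = ψ z := by simpa [hψ0] using sub_smul_dslope ψ 0 z
    have hψq : ψ z * (z * q z + c) = q z := div_mul_cancel₀ _ (hne z hz)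
    calc q z * (1 - z ^ 2 * dslope ψ 0 z) = q z * (1 - z * ψ z) := by rw [← hzψ]; ring
      _ = c * ψ z := by linear_combination -hψq
      _ = c * z * dslope ψ 0 z := by rw [← hzψ]; ring

lemma deriv_sub_sq_div_two_mul_sq_eq {q φ : ℂ → ℂ} {q' φ' c z : ℂ} (hq : HasDerivAt q q' z)
    (hφ : HasDerivAt φ φ' z) (hrel : ∀ᶠ w in 𝓝 z, q w * (1 - w ^ 2 * φ w) = c * w * φ w) :
    (q' - q z ^ 2 / 2) * (1 - z ^ 2 * φ z) ^ 2
      = c * (φ z + z * φ' + (1 - c / 2) * z ^ 2 * φ z ^ 2) := by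
  have hrel₀ : q z * (1 - z ^ 2 * φ z) = c * z * φ z := hrel.self_of_nhds
  have hL : HasDerivAt (fun w => q w * (1 - w ^ 2 * φ w))
      (q' * (1 - z ^ 2 * φ z) - q z * (2 * z * φ z + z ^ 2 * φ')) z := by
    refine (hq.mul (((hasDerivAt_pow 2 z).mul hφ).const_sub 1)).congr_deriv ?_
    simp only [Nat.cast_ofNat, Pi.mul_apply]
    ring
  have hR : HasDerivAt (fun w => c * w * φ w) (c * φ z + c * z * φ') z :=
    (((hasDerivAt_id z).const_mul c).mul hφ).congr_deriv (by simp)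
  have hderiv := hL.unique (hR.congr_of_eventuallyEq hrel)
  linear_combination (1 - z ^ 2 * φ z) * hderiv
    + (2 * z * φ z + z ^ 2 * φ' - q z * (1 - z ^ 2 * φ z) / 2 - c * z * φ z / 2) * hrel₀

theorem norm_deriv_sub_sq_div_two_le {q φ : ℂ → ℂ} {α : ℝ} (hα0 : 0 ≤ α) (hα1 : α < 1)
    (hq : DifferentiableOn ℂ q (ball 0 1)) (hφ : DifferentiableOn ℂ φ (ball 0 1))
    (hφmaps : MapsTo φ (ball 0 1) (closedBall 0 1))
    (hrel : ∀ z ∈ ball (0 : ℂ) 1, q z * (1 - z ^ 2 * φ z) = ((2 * (1 - α) : ℝ) : ℂ) * z * φ z)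
    {z : ℂ} (hz : z ∈ ball (0 : ℂ) 1) :
    (1 - ‖z‖ ^ 2) ^ 2 * ‖deriv q z - q z ^ 2 / 2‖ ≤ 2 * (1 - α ^ 2) := by
  have hmem : ball (0 : ℂ) 1 ∈ 𝓝 z := isOpen_ball.mem_nhds hz
  have hS := deriv_sub_sq_div_two_mul_sq_eq (hq.differentiableAt hmem).hasDerivAt
    (hφ.differentiableAt hmem).hasDerivAt (eventually_of_mem hmem hrel)
  rw [show 1 - ((2 * (1 - α) : ℝ) : ℂ) / 2 = α by push_cast; ring] at hS
  have hr : ‖z‖ < 1 := mem_ball_zero_iff.1 hz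
  have ht : ‖φ z‖ ≤ 1 := mem_closedBall_zero_iff.1 (hφmaps hz)
  have hu : 1 - ‖z‖ ^ 2 * ‖φ z‖ ≤ ‖1 - z ^ 2 * φ z‖ := by
    have := norm_sub_norm_le (1 : ℂ) (z ^ 2 * φ z)
    rwa [norm_one, norm_mul, norm_pow] at this
  have hu0 : 0 < 1 - ‖z‖ ^ 2 * ‖φ z‖ := by nlinarith [norm_nonneg z, norm_nonneg (φ z)]
  have hW : ‖φ z + z * deriv φ z + α * z ^ 2 * φ z ^ 2‖
      ≤ ‖φ z‖ + ‖z‖ * ‖deriv φ z‖ + α * ‖z‖ ^ 2 * ‖φ z‖ ^ 2 := by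
    refine (norm_add₃_le ..).trans_eq ?_
    simp only [norm_mul, norm_pow, Complex.norm_real, Real.norm_of_nonneg hα0]
  have hbound := (mul_le_mul_of_nonneg_left hW (by positivity)).trans
    (sq_one_sub_sq_mul_le_of_mul_one_sub_sq_le hα0 (norm_nonneg z) hr.le (norm_nonneg _) ht
      (Complex.norm_deriv_mul_le_of_mapsTo_closedBall hφ hφmaps hz))
  have hnormS := congrArg norm hS
  rw [norm_mul, norm_mul, norm_pow, Complex.norm_real, Real.norm_of_nonneg (by linarith)] at hnormS
  refine le_of_mul_le_mul_right ?_ (pow_pos (hu0.trans_le hu) 2)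
  calc (1 - ‖z‖ ^ 2) ^ 2 * ‖deriv q z - q z ^ 2 / 2‖ * ‖1 - z ^ 2 * φ z‖ ^ 2
      = 2 * (1 - α) * ((1 - ‖z‖ ^ 2) ^ 2 * ‖φ z + z * deriv φ z + α * z ^ 2 * φ z ^ 2‖) := by
        rw [mul_assoc, hnormS]; ring
    _ ≤ 2 * (1 - α) * ((1 + α) * (1 - ‖z‖ ^ 2 * ‖φ z‖) ^ 2) :=
        mul_le_mul_of_nonneg_left hbound (by linarith)
    _ = 2 * (1 - α ^ 2) * (1 - ‖z‖ ^ 2 * ‖φ z‖) ^ 2 := by ring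
    _ ≤ 2 * (1 - α ^ 2) * ‖1 - z ^ 2 * φ z‖ ^ 2 :=
        mul_le_mul_of_nonneg_left (pow_le_pow_left₀ hu0.le hu 2) (by nlinarith)

theorem convex_order_alpha_zero_second_deriv_schwarzian_bound_general
    (f : ℂ → ℂ) (α : ℝ) (hα0 : 0 ≤ α) (hα1 : α < 1)
    (hf : DifferentiableOn ℂ f (Metric.ball 0 1))
    (hf' : ∀ z ∈ Metric.ball (0:ℂ) 1, deriv f z ≠ 0)
    (hf2 : deriv (deriv f) 0 = 0)
    (hconv : ∀ z ∈ Metric.ball (0:ℂ) 1,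
      α < (1 + z * (deriv (deriv f) z / deriv f z)).re) :
    ∀ z ∈ Metric.ball (0:ℂ) 1,
      (1 - ‖z‖ ^ 2) ^ 2 *
        ‖deriv (deriv (deriv f)) z / deriv f z
          - 3 / 2 * (deriv (deriv f) z / deriv f z) ^ 2‖
        ≤ 2 * (1 - α ^ 2) := by
  intro z hz
  have hf₁ := (hf.analyticOnNhd isOpen_ball).deriv
  have hf₂ := hf₁.deriv
  set q : ℂ → ℂ := fun w => deriv (deriv f) w / deriv f w
  have hq : DifferentiableOn ℂ q (ball 0 1) := hf₂.differentiableOn.div hf₁.differentiableOn hf'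
  obtain ⟨φ, hφ, hφmaps, hrel⟩ :=
    exists_mul_one_sub_sq_mul_eq_of_lt_re hα1 hq (by simp [q, hf2]) hconv
  have hschwarzian : deriv (deriv (deriv f)) z / deriv f z
      - 3 / 2 * (deriv (deriv f) z / deriv f z) ^ 2 = deriv q z - q z ^ 2 / 2 := by
    have hq' : HasDerivAt q _ z := (hf₂ z hz).differentiableAt.hasDerivAt.div
      (hf₁ z hz).differentiableAt.hasDerivAt (hf' z hz)
    rw [hq'.deriv]
    simp only [q]
    field_simp [hf' z hz]
    ring
  rw [hschwarzian]
  exact norm_deriv_sub_sq_div_two_le hα0 hα1 hq hφ hφmaps hrel hz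

theorem convex_order_alpha_zero_second_deriv_schwarzian_bound
    (f : ℂ → ℂ) (α : ℝ) (hα0 : 0 ≤ α) (hα1 : α < 1)
    (hf : DifferentiableOn ℂ f (Metric.ball 0 1))
    (hf' : ∀ z ∈ Metric.ball (0:ℂ) 1, deriv f z ≠ 0)
    (hf0 : f 0 = 0) (hf1 : deriv f 0 = 1) (hf2 : deriv (deriv f) 0 = 0)
    (hconv : ∀ z ∈ Metric.ball (0:ℂ) 1,
      α < (1 + z * (deriv (deriv f) z / deriv f z)).re) :
    ∀ z ∈ Metric.ball (0:ℂ) 1,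
      (1 - ‖z‖ ^ 2) ^ 2 *
        ‖deriv (deriv (deriv f)) z / deriv f z
          - 3 / 2 * (deriv (deriv f) z / deriv f z) ^ 2‖
        ≤ 2 * (1 - α ^ 2) :=
  convex_order_alpha_zero_second_deriv_schwarzian_bound_general f α hα0 hα1 hf hf' hf2 hconv
end

section
/- For 0 ≤ α < 1, the function f_α with f_α'(z) = (1-z²)^{-(1-α)} on the unit disk satisfies sup over z in the unit disk of (1-|z|²)²·|Sf_α(z)| equal to 2(1-α²). -/
/-!
Writing `f' = g` with logarithmic derivative `p = g'/g`, the Schwarzian is `p' - p²/2`. For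
`g = (1 - z²)^(α-1)` one has `p = 2(1 - α)z/(1 - z²)`, whence
`Sf(z) = 2(1 - α)(1 + αz²)/(1 - z²)²`. Since `|1 - z²| ≥ 1 - |z|²` and `|1 + αz²| ≤ 1 + α`, the
weighted quantity `(1 - |z|²)²|Sf(z)|` is at most `2(1 - α)(1 + α)`, and along the real radius it
equals `2(1 - α)(1 + αr²)`, which tends to that bound as `r → 1`.
-/

open Complex Metric Set Filter Topology

noncomputable def schwarzian (f : ℂ → ℂ) (z : ℂ) : ℂ :=
  deriv (deriv (deriv f)) z / deriv f z - 3 / 2 * (deriv (deriv f) z / deriv f z) ^ 2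

lemma schwarzian_eq_of_hasDerivAt_mul {f g p : ℂ → ℂ} {z p' : ℂ}
    (hf : deriv f =ᶠ[𝓝 z] g) (hg : ∀ᶠ w in 𝓝 z, HasDerivAt g (g w * p w) w)
    (hp : HasDerivAt p p' z) (hgz : g z ≠ 0) :
    schwarzian f z = p' - p z ^ 2 / 2 := by
  have hf'' : deriv (deriv f) =ᶠ[𝓝 z] fun w => g w * p w := by
    filter_upwards [hf.eventuallyEq_nhds, hg] with w hfw hgw
    rw [hfw.deriv_eq, hgw.deriv]
  have hf''' : deriv (deriv (deriv f)) z = g z * p z * p z + g z * p' := by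
    rw [hf''.deriv_eq]
    exact (hg.self_of_nhds.mul hp).deriv
  rw [schwarzian, hf''', hf''.self_of_nhds, hf.self_of_nhds]
  field_simp
  ring

lemma one_sub_sq_mem_slitPlane {z : ℂ} (hz : ‖z‖ < 1) : 1 - z ^ 2 ∈ slitPlane := by
  simpa [sub_eq_add_neg] using mem_slitPlane_of_norm_lt_one (z := -z ^ 2) (by simpa using hz)

lemma hasDerivAt_one_sub_sq_cpow (c : ℂ) {z : ℂ} (hz : ‖z‖ < 1) :
    HasDerivAt (fun w => (1 - w ^ 2) ^ c) ((1 - z ^ 2) ^ c * (-2 * c * z / (1 - z ^ 2))) z := by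
  have hmem := one_sub_sq_mem_slitPlane hz
  have hbase : HasDerivAt (fun w : ℂ => 1 - w ^ 2) (-(2 * z)) z := by
    simpa using (hasDerivAt_pow 2 z).const_sub 1
  convert hbase.cpow_const hmem using 1
  rw [cpow_sub _ _ (slitPlane_ne_zero hmem), cpow_one]
  ring

lemma hasDerivAt_mul_div_one_sub_sq (c : ℂ) {z : ℂ} (hz : 1 - z ^ 2 ≠ 0) :
    HasDerivAt (fun w => -2 * c * w / (1 - w ^ 2)) (-2 * c * (1 + z ^ 2) / (1 - z ^ 2) ^ 2) z := by
  have hnum : HasDerivAt (fun w : ℂ => -2 * c * w) (-2 * c) z := by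
    simpa using (hasDerivAt_id z).const_mul (-2 * c)
  have hden : HasDerivAt (fun w : ℂ => 1 - w ^ 2) (-(2 * z)) z := by
    simpa using (hasDerivAt_pow 2 z).const_sub 1
  exact (hnum.div hden hz).congr_deriv (by ring)

lemma schwarzian_of_deriv_eq_one_sub_sq_cpow (α : ℂ) {f : ℂ → ℂ}
    (hf' : ∀ z ∈ ball (0 : ℂ) 1, deriv f z = (1 - z ^ 2) ^ (α - 1)) {z : ℂ} (hz : z ∈ ball 0 1) :
    schwarzian f z = 2 * (1 - α) * (1 + α * z ^ 2) / (1 - z ^ 2) ^ 2 := by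
  have hnorm : ∀ w ∈ ball (0 : ℂ) 1, ‖w‖ < 1 := fun w hw => mem_ball_zero_iff.1 hw
  have hne : 1 - z ^ 2 ≠ 0 := slitPlane_ne_zero (one_sub_sq_mem_slitPlane (hnorm z hz))
  rw [schwarzian_eq_of_hasDerivAt_mul (eventuallyEq_of_mem (isOpen_ball.mem_nhds hz) hf')
    (eventually_of_mem (isOpen_ball.mem_nhds hz) fun w hw =>
      hasDerivAt_one_sub_sq_cpow (α - 1) (hnorm w hw))
    (hasDerivAt_mul_div_one_sub_sq (α - 1) hne)
    (fun h => hne ((cpow_eq_zero_iff _ _).1 h).1)]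
  field_simp
  ring

lemma sq_one_sub_norm_sq_mul_norm_le (α : ℝ) (hα0 : 0 ≤ α) (hα1 : α ≤ 1) {z : ℂ} (hz : ‖z‖ < 1) :
    (1 - ‖z‖ ^ 2) ^ 2 * ‖2 * (1 - (α : ℂ)) * (1 + α * z ^ 2) / (1 - z ^ 2) ^ 2‖
      ≤ 2 * (1 - α ^ 2) := by
  have hne : 1 - z ^ 2 ≠ 0 := slitPlane_ne_zero (one_sub_sq_mem_slitPlane hz)
  have hcoeff : ‖2 * (1 - (α : ℂ))‖ = 2 * (1 - α) := by
    rw [show 2 * (1 - (α : ℂ)) = ((2 * (1 - α) : ℝ) : ℂ) by push_cast; ring, norm_real,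
      Real.norm_of_nonneg (by linarith)]
  have hnum : ‖1 + (α : ℂ) * z ^ 2‖ ≤ 1 + α := by
    have htri := norm_add_le (1 : ℂ) ((α : ℂ) * z ^ 2)
    rw [norm_one, norm_mul, norm_pow, norm_real, Real.norm_of_nonneg hα0] at htri
    have := mul_le_mul_of_nonneg_left (pow_le_one₀ (n := 2) (norm_nonneg z) hz.le) hα0
    linarith
  have hratio : ((1 - ‖z‖ ^ 2) / ‖1 - z ^ 2‖) ^ 2 ≤ 1 := by
    have hden : 1 - ‖z‖ ^ 2 ≤ ‖1 - z ^ 2‖ := by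
      have := norm_sub_norm_le (1 : ℂ) (z ^ 2)
      rwa [norm_one, norm_pow] at this
    have hpos : 0 ≤ 1 - ‖z‖ ^ 2 := by nlinarith [norm_nonneg z]
    exact pow_le_one₀ (by positivity) ((div_le_one (norm_pos_iff.2 hne)).2 hden)
  calc (1 - ‖z‖ ^ 2) ^ 2 * ‖2 * (1 - (α : ℂ)) * (1 + α * z ^ 2) / (1 - z ^ 2) ^ 2‖
      = 2 * (1 - α) * ‖1 + (α : ℂ) * z ^ 2‖ * ((1 - ‖z‖ ^ 2) / ‖1 - z ^ 2‖) ^ 2 := by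
        rw [norm_div, norm_mul, norm_pow, hcoeff]
        ring
    _ ≤ 2 * (1 - α) * (1 + α) * 1 :=
        mul_le_mul (mul_le_mul_of_nonneg_left hnum (by linarith)) hratio (sq_nonneg _)
          (by nlinarith)
    _ = 2 * (1 - α ^ 2) := by ring

lemma sq_one_sub_norm_sq_mul_norm_ofReal (α : ℝ) (hα0 : 0 ≤ α) (hα1 : α ≤ 1) {r : ℝ}
    (hr : |r| < 1) :
    (1 - ‖(r : ℂ)‖ ^ 2) ^ 2 * ‖2 * (1 - (α : ℂ)) * (1 + α * (r : ℂ) ^ 2) / (1 - (r : ℂ) ^ 2) ^ 2‖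
      = 2 * (1 - α) * (1 + α * r ^ 2) := by
  have hr2 : 1 - r ^ 2 ≠ 0 := by nlinarith [sq_abs r, abs_nonneg r]
  have hnonneg : 0 ≤ 2 * (1 - α) * (1 + α * r ^ 2) / (1 - r ^ 2) ^ 2 := by
    have : 0 ≤ α * r ^ 2 := by positivity
    apply div_nonneg <;> nlinarith
  rw [show 2 * (1 - (α : ℂ)) * (1 + α * (r : ℂ) ^ 2) / (1 - (r : ℂ) ^ 2) ^ 2
      = ((2 * (1 - α) * (1 + α * r ^ 2) / (1 - r ^ 2) ^ 2 : ℝ) : ℂ) by push_cast; ring,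
    norm_real, norm_real, Real.norm_of_nonneg hnonneg, Real.norm_eq_abs, sq_abs]
  field_simp

theorem extremal_map_schwarzian_norm
    (α : ℝ) (hα0 : 0 ≤ α) (hα1 : α < 1)
    (f : ℂ → ℂ)
    (hf' : ∀ z ∈ Metric.ball (0:ℂ) 1, deriv f z = (1 - z ^ 2) ^ ((α : ℂ) - 1)) :
    sSup ((fun z => (1 - ‖z‖ ^ 2) ^ 2 *
        ‖deriv (deriv (deriv f)) z / deriv f z
          - 3 / 2 * (deriv (deriv f) z / deriv f z) ^ 2‖) '' Metric.ball (0:ℂ) 1)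
      = 2 * (1 - α ^ 2) := by
  change sSup ((fun z => (1 - ‖z‖ ^ 2) ^ 2 * ‖schwarzian f z‖) '' ball (0 : ℂ) 1) = _
  have hS {z : ℂ} (hz : z ∈ ball (0 : ℂ) 1) := schwarzian_of_deriv_eq_one_sub_sq_cpow (α : ℂ) hf' hz
  have hradial : Tendsto (fun r : ℝ => 2 * (1 - α) * (1 + α * r ^ 2)) (𝓝[<] 1)
      (𝓝 (2 * (1 - α ^ 2))) := by
    have hcont : Continuous fun r : ℝ => 2 * (1 - α) * (1 + α * r ^ 2) := by fun_prop
    convert (hcont.tendsto 1).mono_left nhdsWithin_le_nhds using 2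
    ring
  refine (isLUB_of_mem_closure ?_ (mem_closure_of_tendsto hradial ?_)).csSup_eq
    ⟨_, mem_image_of_mem _ (mem_ball_self one_pos)⟩
  · rintro _ ⟨z, hz, rfl⟩
    dsimp only
    rw [hS hz]
    exact sq_one_sub_norm_sq_mul_norm_le α hα0 hα1.le (mem_ball_zero_iff.1 hz)
  · filter_upwards [Ioo_mem_nhdsLT (neg_lt_self one_pos)] with r hr
    have hr' : |r| < 1 := abs_lt.2 hr
    have hz : (r : ℂ) ∈ ball (0 : ℂ) 1 := by simpa using hr'
    exact ⟨r, hz, by dsimp only; rw [hS hz, sq_one_sub_norm_sq_mul_norm_ofReal α hα0 hα1.le hr']⟩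
end
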